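/- (Theorem 4.1.1, real case) Let a < b be real numbers, for each n ∈ ℕ let sₙ : [a,b] → ℝ be gauge integrable over [a,b], and suppose sₙ(x) → f(x) (finite) as n → ∞ for every x ∈ [a,b]. Then f is gauge integrable over [a,b] if and only if for every ε > 0 there exist a real number c, a function N : [a,b] → ℕ, and a gauge δ on [a,b], such that for every function n : [a,b] → ℕ with n(x) ≥ N(x) for all x, and every δ-fine tagged division D of [a,b] with interval-point pairs ([u,v], x), the mixed Riemann sum Σ_{([u,v],x)∈D} s_{n(x)}(x)(v − u) lies in the closed interval [c, c + ε]. -/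

import Mathlib

/-- A tagged division of `[a, b]`: points `a = u 0 < u 1 < ⋯ < u n = b`
together with tags `t j ∈ [u j, u (j+1)]` for `j = 0, …, n-1`. -/
structure TaggedDiv (a b : ℝ) where
  n : ℕ
  u : ℕ → ℝ
  t : ℕ → ℝ
  n_pos : 0 < n
  left : u 0 = a
  right : u n = b
  mono : ∀ j < n, u j < u (j + 1)
  tag_mem : ∀ j < n, t j ∈ Set.Icc (u j) (u (j + 1))

/-- A tagged division is `δ`-fine if each interval `[u j, u (j+1)]` is contained in
`(t j - δ (t j), t j + δ (t j))`. -/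
def TaggedDiv.IsFine {a b : ℝ} (δ : ℝ → ℝ) (D : TaggedDiv a b) : Prop :=
  ∀ j < D.n,
    Set.Icc (D.u j) (D.u (j + 1)) ⊆ Set.Ioo (D.t j - δ (D.t j)) (D.t j + δ (D.t j))

/-- The Riemann sum of `f` over a tagged division. -/
noncomputable def TaggedDiv.riemannSum {a b : ℝ} (D : TaggedDiv a b) (f : ℝ → ℝ) : ℝ :=
  ∑ j ∈ Finset.range D.n, f (D.t j) * (D.u (j + 1) - D.u j)

/-- A gauge on `[a, b]`: a function positive at each point of `[a, b]`. -/
def IsGauge (a b : ℝ) (δ : ℝ → ℝ) : Prop :=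
  ∀ x ∈ Set.Icc a b, 0 < δ x

/-- `F` is the gauge (Henstock–Kurzweil) integral of `f` over `[a, b]`. -/
def HKIntegral (a b : ℝ) (f : ℝ → ℝ) (F : ℝ) : Prop :=
  ∀ ε > 0, ∃ δ : ℝ → ℝ, IsGauge a b δ ∧
    ∀ D : TaggedDiv a b, D.IsFine δ → |D.riemannSum f - F| < ε

open Filter

namespace TaggedDiv

variable {a b : ℝ} (D : TaggedDiv a b)

lemma u_mono : ∀ {i j : ℕ}, i ≤ j → j ≤ D.n → D.u i ≤ D.u j := by
  intro i j hij hjn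
  induction j with
  | zero => simp_all
  | succ k ih =>
    rcases Nat.eq_or_lt_of_le hij with h | h
    · rw [h]
    · exact (ih (Nat.lt_succ_iff.mp h) ((Nat.le_succ k).trans hjn)).trans (D.mono k hjn).le
  
lemma u_mem (j : ℕ) (hj : j ≤ D.n) : D.u j ∈ Set.Icc a b := by
  constructor
  · have h := D.u_mono (Nat.zero_le j) hj; rwa [D.left] at h
  · have h := D.u_mono hj le_rfl; rwa [D.right] at h

lemma tag_mem_Icc (j : ℕ) (hj : j < D.n) : D.t j ∈ Set.Icc a b := by
  obtain ⟨h1, h2⟩ := D.tag_mem j hj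
  exact ⟨(D.u_mem j hj.le).1.trans h1, h2.trans (D.u_mem (j+1) hj).2⟩

lemma sum_lengths : ∑ j ∈ Finset.range D.n, (D.u (j + 1) - D.u j) = b - a := by
  rw [Finset.sum_range_sub, D.left, D.right]

end TaggedDiv

/-- Extend a tagged division of `[a, b]` by one extra interval `[b, y]` with tag `τ`. -/
def TaggedDiv.extend {a b : ℝ} (D : TaggedDiv a b) (y τ : ℝ) (hby : b < y)
    (hτ : τ ∈ Set.Icc b y) : TaggedDiv a y where
  n := D.n + 1
  u := fun j => if j ≤ D.n then D.u j else y
  t := fun j => if j < D.n then D.t j else τ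
  n_pos := Nat.succ_pos _
  left := by simp [Nat.zero_le, D.left]
  right := by simp
  mono := by
    intro j hj
    rcases Nat.lt_succ_iff_lt_or_eq.mp hj with h | h
    · simp only [h.le, h, if_pos, Nat.succ_le_of_lt h]
      simpa [h.le, Nat.succ_le_of_lt h] using D.mono j h
    · subst h
      simp only [le_refl, if_pos, Nat.succ_le_iff, lt_irrefl, if_neg, D.right]
      simpa using hby
  tag_mem := by
    intro j hj
    rcases Nat.lt_succ_iff_lt_or_eq.mp hj with h | h
    · simpa [h, h.le, Nat.succ_le_of_lt h] using D.tag_mem j h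
    · subst h
      simpa [D.right] using hτ

lemma TaggedDiv.extend_isFine {a b : ℝ} {D : TaggedDiv a b} {y τ : ℝ} {hby : b < y}
    {hτ : τ ∈ Set.Icc b y} {δ : ℝ → ℝ} (hD : D.IsFine δ)
    (hnew : Set.Icc b y ⊆ Set.Ioo (τ - δ τ) (τ + δ τ)) :
    (D.extend y τ hby hτ).IsFine δ := by
  intro j hj
  rcases Nat.lt_succ_iff_lt_or_eq.mp hj with h | h
  · simpa [TaggedDiv.extend, h, h.le, Nat.succ_le_of_lt h] using hD j h
  · subst h
    simpa [TaggedDiv.extend, D.right] using hnew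

/-- Cousin's lemma: every gauge on `[a, b]` admits a fine tagged division. -/
lemma cousin (a b : ℝ) (hab : a < b) (δ : ℝ → ℝ) (hδ : IsGauge a b δ) :
    ∃ D : TaggedDiv a b, D.IsFine δ := by
  set S : Set ℝ := {x | a < x ∧ x ≤ b ∧ ∃ D : TaggedDiv a x, D.IsFine δ} with hS
  have hδa : 0 < δ a := hδ a ⟨le_rfl, hab.le⟩
  -- S is nonempty
  have hx0 : min b (a + δ a / 2) ∈ S := by
    set x₀ := min b (a + δ a / 2) with hx₀
    have hax : a < x₀ := lt_min hab (by linarith)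
    refine ⟨hax, min_le_left _ _, ⟨⟨1, fun j => if j = 0 then a else x₀, fun _ => a,
      one_pos, by simp, by simp, ?_, ?_⟩, ?_⟩⟩
    · intro j hj; interval_cases j; simpa using hax
    · intro j hj; interval_cases j; exact ⟨le_rfl, hax.le⟩
    · intro j hj
      interval_cases j
      intro z hz
      simp only [Set.mem_Icc] at hz
      norm_num at hz ⊢
      have h2 : x₀ ≤ a + δ a / 2 := min_le_right _ _
      exact ⟨by linarith [hz.1], by linarith [hz.2]⟩
  have hbdd : BddAbove S := ⟨b, fun x hx => hx.2.1⟩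
  have hne : S.Nonempty := ⟨_, hx0⟩
  set c := sSup S with hc
  have hac : a < c := lt_of_lt_of_le hx0.1 (le_csSup hbdd hx0)
  have hcb : c ≤ b := csSup_le hne fun x hx => hx.2.1
  have hδc : 0 < δ c := hδ c ⟨hac.le, hcb⟩
  obtain ⟨x, hxS, hxc⟩ := exists_lt_of_lt_csSup hne (show c - δ c < c by linarith)
  have hxle : x ≤ c := le_csSup hbdd hxS
  obtain ⟨hax, hxb, D, hD⟩ := hxS
  rcases lt_or_eq_of_le hcb with hlt | heq
  · -- c < b : contradiction, we can go beyond c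
    exfalso
    set y := min b (c + δ c / 2) with hy
    have hcy : c < y := lt_min hlt (by linarith)
    have hxy : x < y := lt_of_le_of_lt hxle hcy
    have hτ : c ∈ Set.Icc x y := ⟨hxle, hcy.le⟩
    have hyS : y ∈ S := by
      refine ⟨hax.trans hxy, min_le_left _ _, ⟨D.extend y c hxy hτ,
        TaggedDiv.extend_isFine hD ?_⟩⟩
      intro z hz
      have hy2 : y ≤ c + δ c / 2 := min_le_right _ _
      exact ⟨by linarith [hz.1], by linarith [hz.2]⟩
    exact absurd (le_csSup hbdd hyS) (not_le.mpr hcy)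
  · -- c = b
    rcases lt_or_eq_of_le hxb with hxlt | hxeq
    · have hτ : b ∈ Set.Icc x b := ⟨hxlt.le, le_rfl⟩
      rw [heq] at hxc hδc
      refine ⟨D.extend b b hxlt hτ, TaggedDiv.extend_isFine hD ?_⟩
      intro z hz
      exact ⟨by linarith [hz.1], by linarith [hz.2]⟩
    · subst hxeq
      exact ⟨D, hD⟩


/-- **Theorem 4.1.1 (real case).** For integrable `sₙ` converging pointwise to `f` on
`[a,b]`, `f` is gauge integrable over `[a,b]` iff for every `ε > 0` there are a closed
interval of length `ε`, a function `N` and a gauge `δ` on `[a,b]` such that every mixed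
Riemann sum `Σ s_{n(x)}(x)(v-u)` with `n(x) ≥ N(x)` over a `δ`-fine division lies in that
interval. -/
theorem hkIntegrable_limit_iff (a b : ℝ) (hab : a < b) (s : ℕ → ℝ → ℝ) (f : ℝ → ℝ)
    (hs : ∀ n : ℕ, ∃ S : ℝ, HKIntegral a b (s n) S)
    (hconv : ∀ x ∈ Set.Icc a b, Tendsto (fun n => s n x) atTop (nhds (f x))) :
    (∃ F : ℝ, HKIntegral a b f F) ↔
      ∀ ε > 0, ∃ (c : ℝ) (N : ℝ → ℕ) (δ : ℝ → ℝ), IsGauge a b δ ∧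
        ∀ nf : ℝ → ℕ, (∀ x ∈ Set.Icc a b, N x ≤ nf x) →
          ∀ D : TaggedDiv a b, D.IsFine δ →
            (∑ j ∈ Finset.range D.n, s (nf (D.t j)) (D.t j) * (D.u (j + 1) - D.u j))
              ∈ Set.Icc c (c + ε) := by
  classical
  constructor
  · rintro ⟨F, hF⟩ ε hε
    obtain ⟨δ, hδ, hD⟩ := hF (ε / 4) (by positivity)
    have hba : (0:ℝ) < b - a := by linarith
    have key : ∀ x ∈ Set.Icc a b, ∃ N : ℕ, ∀ n ≥ N, |s n x - f x| ≤ ε / (4 * (b - a)) := by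
      intro x hx
      have h1 := (hconv x hx)
      rw [Metric.tendsto_atTop] at h1
      obtain ⟨N, hN⟩ := h1 (ε / (4 * (b - a))) (by positivity)
      exact ⟨N, fun n hn => le_of_lt (by simpa [Real.dist_eq] using hN n hn)⟩
    refine ⟨F - ε / 2, fun x => if h : x ∈ Set.Icc a b then (key x h).choose else 0,
      δ, hδ, ?_⟩
    intro nf hnf D hfine
    have hrs := hD D hfine
    have hdiff : |(∑ j ∈ Finset.range D.n, s (nf (D.t j)) (D.t j) * (D.u (j+1) - D.u j))
        - D.riemannSum f| ≤ ε / 4 := by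
      rw [TaggedDiv.riemannSum, ← Finset.sum_sub_distrib]
      calc |∑ j ∈ Finset.range D.n, (s (nf (D.t j)) (D.t j) * (D.u (j+1) - D.u j)
              - f (D.t j) * (D.u (j+1) - D.u j))|
          ≤ ∑ j ∈ Finset.range D.n, |s (nf (D.t j)) (D.t j) * (D.u (j+1) - D.u j)
              - f (D.t j) * (D.u (j+1) - D.u j)| := Finset.abs_sum_le_sum_abs _ _
        _ ≤ ∑ j ∈ Finset.range D.n, (ε / (4 * (b - a))) * (D.u (j+1) - D.u j) := by
            apply Finset.sum_le_sum
            intro j hj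
            have hjn := Finset.mem_range.mp hj
            have ht := D.tag_mem_Icc j hjn
            have hΔ : (0:ℝ) ≤ D.u (j+1) - D.u j := by linarith [D.mono j hjn]
            rw [← sub_mul, abs_mul, abs_of_nonneg hΔ]
            apply mul_le_mul_of_nonneg_right _ hΔ
            have hn : (key (D.t j) ht).choose ≤ nf (D.t j) := by
              have := hnf (D.t j) ht
              beta_reduce at this
              rwa [dif_pos ht] at this
            exact (key (D.t j) ht).choose_spec _ hn
        _ = (ε / (4 * (b - a))) * (b - a) := by
            rw [← Finset.mul_sum, D.sum_lengths]
        _ ≤ ε / 4 := by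
            rw [div_mul_eq_mul_div, div_le_div_iff₀ (by positivity) (by norm_num)]
            ring_nf
            nlinarith
    have h1 := abs_lt.mp hrs
    have h2 := abs_le.mp hdiff
    constructor <;> [skip; skip] <;>
      · simp only [TaggedDiv.riemannSum] at h1 h2 ⊢
        linarith
  · intro h
    have H := fun k : ℕ => h (1 / ((k:ℝ) + 1)) (by positivity)
    choose c N δ hδ hP using H
    have key : ∀ k (D : TaggedDiv a b), D.IsFine (δ k) →
        D.riemannSum f ∈ Set.Icc (c k) (c k + 1 / ((k:ℝ) + 1)) := by
      intro k D hfine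
      have htend : Tendsto (fun m => ∑ j ∈ Finset.range D.n,
          s (max (N k (D.t j)) m) (D.t j) * (D.u (j+1) - D.u j)) atTop
          (nhds (D.riemannSum f)) := by
        simp only [TaggedDiv.riemannSum]
        apply tendsto_finset_sum
        intro j hj
        have ht := D.tag_mem_Icc j (Finset.mem_range.mp hj)
        have h1 : Tendsto (fun m => max (N k (D.t j)) m) atTop atTop :=
          tendsto_atTop_mono (fun m => le_max_right _ _) tendsto_id
        exact ((hconv _ ht).comp h1).mul_const _
      refine isClosed_Icc.mem_of_tendsto htend (Filter.Eventually.of_forall ?_)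
      intro m
      exact hP k (fun x => max (N k x) m) (fun x hx => le_max_left _ _) D hfine
    have hδ'ne : ∀ k : ℕ, (Finset.range (k+1)).Nonempty :=
      fun k => ⟨0, Finset.mem_range.mpr (Nat.succ_pos k)⟩
    set δ' : ℕ → ℝ → ℝ := fun k x => (Finset.range (k+1)).inf' (hδ'ne k) (fun i => δ i x)
      with hδ'
    have hδ'g : ∀ k, IsGauge a b (δ' k) := by
      intro k x hx
      exact (Finset.lt_inf'_iff _).mpr fun i _ => hδ i x hx
    have hfine' : ∀ k i, i ≤ k → ∀ D : TaggedDiv a b, D.IsFine (δ' k) → D.IsFine (δ i) := by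
      intro k i hik D hD j hj z hz
      obtain ⟨hz1, hz2⟩ := hD j hj hz
      have h2 : δ' k (D.t j) ≤ δ i (D.t j) :=
        Finset.inf'_le _ (Finset.mem_range.mpr (Nat.lt_succ_of_le hik))
      exact ⟨by linarith, by linarith⟩
    choose Dk hDk using fun k => cousin a b hab (δ' k) (hδ'g k)
    set Fk : ℕ → ℝ := fun k => (Dk k).riemannSum f with hFk
    have hmem : ∀ i k, i ≤ k → Fk k ∈ Set.Icc (c i) (c i + 1 / ((i:ℝ) + 1)) :=
      fun i k hik => key i (Dk k) (hfine' k i hik (Dk k) (hDk k))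
    have hcauchy : CauchySeq Fk := by
      apply cauchySeq_of_le_tendsto_0 (fun M : ℕ => 1 / ((M:ℝ) + 1)) ?_
        tendsto_one_div_add_atTop_nhds_zero_nat
      intro n m M hn hm
      have h1 := hmem M n hn
      have h2 := hmem M m hm
      rw [Real.dist_eq, abs_le]
      exact ⟨by linarith [h1.1, h1.2, h2.1, h2.2], by linarith [h1.1, h1.2, h2.1, h2.2]⟩
    obtain ⟨F, hFlim⟩ := cauchySeq_tendsto_of_complete hcauchy
    have hFmem : ∀ k, F ∈ Set.Icc (c k) (c k + 1 / ((k:ℝ) + 1)) := by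
      intro k
      exact isClosed_Icc.mem_of_tendsto hFlim
        (eventually_atTop.mpr ⟨k, fun m hm => hmem k m hm⟩)
    refine ⟨F, ?_⟩
    intro ε hε
    obtain ⟨k, hk⟩ := exists_nat_one_div_lt hε
    refine ⟨δ k, hδ k, ?_⟩
    intro D hfine
    have h1 := key k D hfine
    have h2 := hFmem k
    have h3 : |D.riemannSum f - F| ≤ 1 / ((k:ℝ) + 1) := by
      rw [abs_le]
      exact ⟨by linarith [h1.1, h1.2, h2.1, h2.2], by linarith [h1.1, h1.2, h2.1, h2.2]⟩
    exact lt_of_le_of_lt h3 hk
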